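/- If an 'evident (p,μ)-belief' event E is witnessed by a set J (i.e., E ⊆ B_j^p(E) for all j ∈ J with |J| ≥ μ|I|), and moreover E ⊆ F_μ^n for the belief hierarchy of an event F, then E ⊆ F_μ^{n+1}. Combined with the base case E ⊆ F_μ^1 (which holds whenever there is J' with |J'| ≥ μ|I| and E ⊆ B_j^p(F) for all j ∈ J'), it follows by induction that if F is common (p,μ)-belief at ω (there is an evident (p,μ)-belief event E containing ω with a μ-fraction of agents j satisfying E ⊆ B_j^p(F)), then ω ∈ ⋂_{n≥1} F_μ^n. -/
import Mathlib


theorem common_belief_mem_iInter_hierarchy {Ω ι : Type*} [Fintype ι] [DecidableEq ι] [Nonempty ι]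
    (p μ : ℝ) (B : ι → Set Ω → Set Ω)
    (hmono : ∀ i (E F : Set Ω), E ⊆ F → B i E ⊆ B i F)
    (F : Set Ω) (Fh : ℕ → Set Ω)
    (hF0 : Fh 0 = F)
    (hFs : ∀ n, Fh (n + 1) =
      ⋃ J ∈ {J : Finset ι | μ * (Fintype.card ι : ℝ) ≤ (J.card : ℝ)},
        ⋂ j ∈ J, B j (Fh n))
    -- inductive step: an evident (p, μ)-belief event contained in Fh n is contained in Fh (n+1)
    (E : Set Ω)
    (hevident : ∃ J : Finset ι, μ * (Fintype.card ι : ℝ) ≤ (J.card : ℝ) ∧ ∀ j ∈ J, E ⊆ B j E) :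
    (∀ n, E ⊆ Fh n → E ⊆ Fh (n + 1)) ∧
    -- and hence: common (p, μ)-belief at ω implies ω ∈ ⋂_{n ≥ 1} Fh n
    (∀ ω : Ω, ω ∈ E →
      (∃ J : Finset ι, μ * (Fintype.card ι : ℝ) ≤ (J.card : ℝ) ∧ ∀ j ∈ J, E ⊆ B j F) →
      ω ∈ ⋂ n, Fh (n + 1)) := by
  obtain ⟨J, hJcard, hJ⟩ := hevident
  have step : ∀ n, E ⊆ Fh n → E ⊆ Fh (n + 1) := by
    intro n hn
    rw [hFs n]
    intro ω hω
    refine Set.mem_biUnion hJcard ?_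
    refine Set.mem_biInter fun j hj => ?_
    exact hmono j E (Fh n) hn (hJ j hj hω)
  refine ⟨step, fun ω hω ⟨J', hJ'card, hJ'⟩ => ?_⟩
  have base : E ⊆ Fh 1 := by
    rw [hFs 0, hF0]
    intro x hx
    refine Set.mem_biUnion hJ'card (Set.mem_biInter fun j hj => hJ' j hj hx)
  have : ∀ n, E ⊆ Fh (n + 1) := by
    intro n; induction n with
    | zero => exact base
    | succ k ih => exact step (k + 1) ih
  exact Set.mem_iInter.2 fun n => this n hω
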